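/- For every positive definite quadratic form Q in 2 variables, the covering density satisfies Θ(Q) ≥ 2π/√27 = 1.2091…, i.e., the form Q_{A*_2} attains the minimal lattice covering density in dimension 2 (Kershner's theorem). -/

import Mathlib

open Matrix

noncomputable section

/-- `Q[x] = xᵀ Q x`. -/
def quadForm {d : ℕ} (Q : Matrix (Fin d) (Fin d) ℝ) (x : Fin d → ℝ) : ℝ :=
  x ⬝ᵥ (Q *ᵥ x)

/-- Coercion of an integer vector to a real vector. -/
def intCast {d : ℕ} (v : Fin d → ℤ) : Fin d → ℝ := fun i => (v i : ℝ)

/-- A positive definite quadratic form: a symmetric positive definite real matrix. -/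
def IsPQF {d : ℕ} (Q : Matrix (Fin d) (Fin d) ℝ) : Prop :=
  Q.IsSymm ∧ Q.PosDef

/-- The homogeneous minimum `λ(Q) = min {Q[v] : v ∈ ℤ^d \ {0}}`. -/
def homMin {d : ℕ} (Q : Matrix (Fin d) (Fin d) ℝ) : ℝ :=
  sInf {r | ∃ v : Fin d → ℤ, v ≠ 0 ∧ r = quadForm Q (intCast v)}

/-- The set of minimal vectors `Min(Q)`. -/
def minVecs {d : ℕ} (Q : Matrix (Fin d) (Fin d) ℝ) : Set (Fin d → ℤ) :=
  {v | v ≠ 0 ∧ quadForm Q (intCast v) = homMin Q}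

/-- The inhomogeneous minimum `μ(Q) = max_{x ∈ ℝ^d} min_{v ∈ ℤ^d} Q[x - v]`. -/
def inhomMin {d : ℕ} (Q : Matrix (Fin d) (Fin d) ℝ) : ℝ :=
  ⨆ x : Fin d → ℝ, ⨅ v : Fin d → ℤ, quadForm Q (x - intCast v)

/-- `κ_d`, the volume of the `d`-dimensional Euclidean unit ball. -/
def ballVol (d : ℕ) : ℝ :=
  (MeasureTheory.volume (Metric.ball (0 : EuclideanSpace ℝ (Fin d)) 1)).toReal

/-- The packing density `δ(Q)`. -/
def packDensity {d : ℕ} (Q : Matrix (Fin d) (Fin d) ℝ) : ℝ :=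
  Real.sqrt (homMin Q ^ d / Q.det) * ballVol d / 2 ^ d

/-- The covering density `Θ(Q)`. -/
def covDensity {d : ℕ} (Q : Matrix (Fin d) (Fin d) ℝ) : ℝ :=
  Real.sqrt (inhomMin Q ^ d / Q.det) * ballVol d

/-- The packing-covering constant `γ(Q)`. -/
def pcConst {d : ℕ} (Q : Matrix (Fin d) (Fin d) ℝ) : ℝ :=
  2 * Real.sqrt (inhomMin Q / homMin Q)

/-- `Q` is perfect: it is the unique symmetric matrix `Q'` with `Q'[v] = λ(Q)`
for all `v ∈ Min(Q)`. -/
def IsPerfectForm {d : ℕ} (Q : Matrix (Fin d) (Fin d) ℝ) : Prop :=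
  ∀ Q' : Matrix (Fin d) (Fin d) ℝ, Q'.IsSymm →
    (∀ v ∈ minVecs Q, quadForm Q' (intCast v) = homMin Q) → Q' = Q

/-- `Q` is eutactic: `Q⁻¹ = Σ_{v ∈ Min(Q)} c_v · v vᵀ` with all `c_v > 0`. -/
def IsEutacticForm {d : ℕ} (Q : Matrix (Fin d) (Fin d) ℝ) : Prop :=
  ∃ (s : Finset (Fin d → ℤ)) (c : (Fin d → ℤ) → ℝ),
    (s : Set (Fin d → ℤ)) = minVecs Q ∧ (∀ v ∈ s, 0 < c v) ∧
    Q⁻¹ = ∑ v ∈ s, c v • vecMulVec (intCast v) (intCast v)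

/-- `Q` is extreme: a local maximum of the packing density among PQFs. -/
def IsExtremeForm {d : ℕ} (Q : Matrix (Fin d) (Fin d) ℝ) : Prop :=
  ∃ ε > (0 : ℝ), ∀ Q' : Matrix (Fin d) (Fin d) ℝ, IsPQF Q' →
    (∀ i j, |Q' i j - Q i j| < ε) → packDensity Q' ≤ packDensity Q

/-- The form `Q_{A*_d}` with diagonal entries `d` and off-diagonal entries `-1`. -/
def QAstar (d : ℕ) : Matrix (Fin d) (Fin d) ℝ :=
  Matrix.of fun i j => if i = j then (d : ℝ) else -1

/-! Every binary form is arithmetically equivalent to a Gauss-reduced one, `0 ≤ 2b ≤ a ≤ c`, and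
equivalence preserves `μ` and `det`. For any form, `μ` is at most the squared circumradius
`R² = ac(a + c - 2b) / (4 det)` of the basis triangle `0, e₀, e₁` measured in `Q`: modulo `ℤ²` every
point lies in that triangle or in its image under `y ↦ e₀ + e₁ - y`, and the barycentric average
of `Q[y - vᵢ]` over the vertices is `R² - Q[y - o] ≤ R²`, with `o` the circumcentre. When the
triangle is non-obtuse (`0 ≤ b ≤ a, c`) the circumcentre is a deep hole, so `μ = R²`. Kershner's
bound then reduces to the polynomial inequality `64 det³ ≤ 27 (ac(a + c - 2b))²` for reduced
forms, with equality at the hexagonal form `[[2, 1], [1, 2]]`, which is equivalent to `Q_{A*_2}`. -/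

open Real

section IntEquivalent

variable {d : ℕ}

lemma quadForm_transpose_mul_mul (A Q : Matrix (Fin d) (Fin d) ℝ) (x : Fin d → ℝ) :
    quadForm (Aᵀ * Q * A) x = quadForm Q (A *ᵥ x) := by
  rw [quadForm, quadForm, ← mulVec_mulVec, ← mulVec_mulVec, dotProduct_mulVec, vecMul_transpose]

lemma quadForm_smul (Q : Matrix (Fin d) (Fin d) ℝ) (c : ℝ) (x : Fin d → ℝ) :
    quadForm Q (c • x) = c ^ 2 * quadForm Q x := by
  simp only [quadForm, mulVec_smul, dotProduct_smul, smul_dotProduct, smul_eq_mul]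
  ring

lemma map_intCast_mulVec_intCast (U : Matrix (Fin d) (Fin d) ℤ) (v : Fin d → ℤ) :
    U.map (Int.cast : ℤ → ℝ) *ᵥ intCast v = intCast (U *ᵥ v) :=
  funext fun i => ((Int.castRingHom ℝ).map_mulVec U v i).symm

lemma quadForm_transpose_mul_mul_intCast (U : Matrix (Fin d) (Fin d) ℤ)
    (Q : Matrix (Fin d) (Fin d) ℝ) (v : Fin d → ℤ) :
    quadForm ((U.map (Int.cast : ℤ → ℝ))ᵀ * Q * U.map Int.cast) (intCast v) =
      quadForm Q (intCast (U *ᵥ v)) := by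
  rw [quadForm_transpose_mul_mul, map_intCast_mulVec_intCast]

lemma isUnit_map_intCast {U : Matrix (Fin d) (Fin d) ℤ} (hU : IsUnit U.det) :
    IsUnit (U.map (Int.cast : ℤ → ℝ)) := by
  rw [isUnit_iff_isUnit_det, ← Int.cast_det]
  exact hU.map (Int.castRingHom ℝ)

lemma IsPQF.quadForm_pos {Q : Matrix (Fin d) (Fin d) ℝ} (hQ : IsPQF Q) {x : Fin d → ℝ}
    (hx : x ≠ 0) : 0 < quadForm Q x :=
  hQ.2.dotProduct_mulVec_pos hx

lemma IsPQF.quadForm_nonneg {Q : Matrix (Fin d) (Fin d) ℝ} (hQ : IsPQF Q) (x : Fin d → ℝ) :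
    0 ≤ quadForm Q x :=
  hQ.2.posSemidef.dotProduct_mulVec_nonneg x

def IntEquivalent (Q Q' : Matrix (Fin d) (Fin d) ℝ) : Prop :=
  ∃ U : Matrix (Fin d) (Fin d) ℤ, IsUnit U.det ∧
    Q' = (U.map (Int.cast : ℤ → ℝ))ᵀ * Q * U.map Int.cast

lemma intEquivalent_of_isUnit (Q : Matrix (Fin d) (Fin d) ℝ) {U : Matrix (Fin d) (Fin d) ℤ}
    (hU : IsUnit U.det) : IntEquivalent Q ((U.map (Int.cast : ℤ → ℝ))ᵀ * Q * U.map Int.cast) :=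
  ⟨U, hU, rfl⟩

namespace IntEquivalent

variable {Q Q' Q'' : Matrix (Fin d) (Fin d) ℝ}

lemma trans (h : IntEquivalent Q Q') (h' : IntEquivalent Q' Q'') : IntEquivalent Q Q'' := by
  obtain ⟨U, hU, rfl⟩ := h
  obtain ⟨V, hV, rfl⟩ := h'
  refine ⟨U * V, by simpa only [det_mul] using hU.mul hV, ?_⟩
  rw [show (U * V).map (Int.cast : ℤ → ℝ) = U.map Int.cast * V.map Int.cast from
    Matrix.map_mul (f := Int.castRingHom ℝ), transpose_mul]
  simp only [Matrix.mul_assoc]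

lemma det_eq (h : IntEquivalent Q Q') : Q'.det = Q.det := by
  obtain ⟨U, hU, rfl⟩ := h
  have hdet : (U.map (Int.cast : ℤ → ℝ)).det * (U.map (Int.cast : ℤ → ℝ)).det = 1 := by
    rw [← Int.cast_det, ← Int.cast_mul, Int.isUnit_mul_self hU, Int.cast_one]
  rw [det_mul, det_mul, det_transpose]
  linear_combination Q.det * hdet

lemma isPQF (h : IntEquivalent Q Q') (hQ : IsPQF Q) : IsPQF Q' := by
  obtain ⟨U, hU, rfl⟩ := h
  have hpos := hQ.2.conjTranspose_mul_mul_same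
    (mulVec_injective_iff_isUnit.mpr (isUnit_map_intCast hU))
  rw [conjTranspose_eq_transpose_of_trivial] at hpos
  exact ⟨hpos.1, hpos⟩

lemma inhomMin_eq (h : IntEquivalent Q Q') : inhomMin Q' = inhomMin Q := by
  obtain ⟨U, hU, rfl⟩ := h
  have hsurjℤ : Function.Surjective U.mulVec :=
    mulVec_surjective_iff_isUnit.mpr ((isUnit_iff_isUnit_det U).mpr hU)
  have hsurjℝ : Function.Surjective (U.map (Int.cast : ℤ → ℝ)).mulVec :=
    mulVec_surjective_iff_isUnit.mpr (isUnit_map_intCast hU)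
  simp only [inhomMin, quadForm_transpose_mul_mul, mulVec_sub, map_intCast_mulVec_intCast]
  simp only [fun x => hsurjℤ.iInf_comp fun w => quadForm Q (x - intCast w)]
  exact hsurjℝ.iSup_comp fun y => ⨅ v, quadForm Q (y - intCast v)

lemma covDensity_eq (h : IntEquivalent Q Q') : covDensity Q' = covDensity Q := by
  rw [covDensity, covDensity, h.inhomMin_eq, h.det_eq]

end IntEquivalent

end IntEquivalent

section Binary

variable {Q : Matrix (Fin 2) (Fin 2) ℝ}

lemma Matrix.IsSymm.det_fin_two (hQ : Q.IsSymm) : Q.det = Q 0 0 * Q 1 1 - Q 0 1 ^ 2 := by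
  rw [Matrix.det_fin_two, hQ.apply 0 1, sq]

lemma quadForm_fin_two (hQ : Q.IsSymm) (y : Fin 2 → ℝ) :
    quadForm Q y = Q 0 0 * y 0 ^ 2 + 2 * Q 0 1 * y 0 * y 1 + Q 1 1 * y 1 ^ 2 := by
  simp only [quadForm, dotProduct, mulVec, Fin.sum_univ_two, hQ.apply 0 1]
  ring

lemma quadForm_vec2 (hQ : Q.IsSymm) (s t : ℝ) :
    quadForm Q ![s, t] = Q 0 0 * s ^ 2 + 2 * Q 0 1 * s * t + Q 1 1 * t ^ 2 := by
  simp [quadForm_fin_two hQ]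

lemma isPQF_of_fin_two (hQ : Q.IsSymm) (ha : 0 < Q 0 0) (hD : 0 < Q.det) : IsPQF Q := by
  refine ⟨hQ, .of_dotProduct_mulVec_pos hQ fun x hx => ?_⟩
  change 0 < quadForm Q x
  rw [hQ.det_fin_two] at hD
  have key : Q 0 0 * quadForm Q x =
      (Q 0 0 * x 0 + Q 0 1 * x 1) ^ 2 + (Q 0 0 * Q 1 1 - Q 0 1 ^ 2) * x 1 ^ 2 := by
    rw [quadForm_fin_two hQ]; ring
  refine pos_of_mul_pos_right (key ▸ ?_) ha.le
  by_cases h1 : x 1 = 0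
  · have h0 : x 0 ≠ 0 := fun h0 => hx (by ext i; fin_cases i <;> simp [h0, h1])
    simpa [h1] using sq_pos_of_ne_zero (mul_ne_zero ha.ne' h0)
  · exact add_pos_of_nonneg_of_pos (sq_nonneg _) (mul_pos hD (sq_pos_of_ne_zero h1))

lemma IsPQF.det_mul_sq_add_sq_le (hQ : IsPQF Q) (y : Fin 2 → ℝ) :
    Q.det * (y 0 ^ 2 + y 1 ^ 2) ≤ (Q 0 0 + Q 1 1) * quadForm Q y := by
  have ha : 0 < Q 0 0 := hQ.2.diag_pos
  have hc : 0 < Q 1 1 := hQ.2.diag_pos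
  rw [quadForm_fin_two hQ.1, hQ.1.det_fin_two]
  nlinarith [sq_nonneg (Q 0 0 * y 0 + Q 0 1 * y 1), sq_nonneg (Q 0 1 * y 0 + Q 1 1 * y 1)]

lemma IsPQF.finite_setOf_quadForm_intCast_le (hQ : IsPQF Q) (C : ℝ) :
    {v : Fin 2 → ℤ | quadForm Q (intCast v) ≤ C}.Finite := by
  set N := ⌈(Q 0 0 + Q 1 1) * C / Q.det⌉
  have hbound : ∀ v : Fin 2 → ℤ, quadForm Q (intCast v) ≤ C → ∀ i, |v i| ≤ N := by
    intro v hv i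
    have hsq : ((v i : ℤ) : ℝ) ^ 2 ≤ (Q 0 0 + Q 1 1) * C / Q.det := by
      rw [le_div_iff₀ hQ.2.det_pos]
      have hi : ((v i : ℤ) : ℝ) ^ 2 ≤ ((v 0 : ℤ) : ℝ) ^ 2 + ((v 1 : ℤ) : ℝ) ^ 2 := by
        fin_cases i <;> simp [sq_nonneg]
      have htr : 0 ≤ Q 0 0 + Q 1 1 := (add_pos hQ.2.diag_pos hQ.2.diag_pos).le
      have hcoer := hQ.det_mul_sq_add_sq_le (intCast v)
      simp only [intCast] at hcoer
      linarith [mul_le_mul_of_nonneg_left hv htr, mul_le_mul_of_nonneg_left hi hQ.2.det_pos.le]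
    have : v i ^ 2 ≤ N := by exact_mod_cast hsq.trans (Int.le_ceil _)
    exact (Int.natCast_natAbs (v i) ▸ Int.natAbs_le_self_sq (v i)).trans this
  exact (Set.finite_Icc (fun _ => -N) (fun _ => N)).subset fun v hv =>
    ⟨fun i => (abs_le.mp (hbound v hv i)).1, fun i => (abs_le.mp (hbound v hv i)).2⟩

lemma IsPQF.exists_forall_quadForm_intCast_le (hQ : IsPQF Q) :
    ∃ w : Fin 2 → ℤ, w ≠ 0 ∧ ∀ v, v ≠ 0 → quadForm Q (intCast w) ≤ quadForm Q (intCast v) := by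
  set S := {v : Fin 2 → ℤ | v ≠ 0 ∧ quadForm Q (intCast v) ≤ quadForm Q (intCast 1)}
  have hS : S.Finite := (hQ.finite_setOf_quadForm_intCast_le _).subset fun v hv => hv.2
  obtain ⟨w, hwS, hw⟩ := S.exists_min_image (fun v => quadForm Q (intCast v)) hS
    ⟨1, one_ne_zero, le_rfl⟩
  refine ⟨w, hwS.1, fun v hv => ?_⟩
  by_cases hvS : v ∈ S
  · exact hw v hvS
  · exact hwS.2.trans (not_le.mp fun h => hvS ⟨hv, h⟩).le

lemma IsPQF.isCoprime_of_forall_quadForm_intCast_le (hQ : IsPQF Q) {w : Fin 2 → ℤ} (hw : w ≠ 0)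
    (hmin : ∀ v, v ≠ 0 → quadForm Q (intCast w) ≤ quadForm Q (intCast v)) :
    IsCoprime (w 0) (w 1) := by
  rw [Int.isCoprime_iff_gcd_eq_one]
  set g := Int.gcd (w 0) (w 1)
  have hg0 : g ≠ 0 := fun h => hw <| by
    obtain ⟨h0, h1⟩ := Int.gcd_eq_zero_iff.mp h
    ext i; fin_cases i <;> assumption
  set w' : Fin 2 → ℤ := fun i => w i / g
  have hw_eq : intCast w = (g : ℝ) • intCast w' := by
    ext i
    have hdvd : (g : ℤ) ∣ w i := by
      fin_cases i
      exacts [Int.gcd_dvd_left _ _, Int.gcd_dvd_right _ _]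
    simp only [intCast, w', Pi.smul_apply, smul_eq_mul]
    rw [← Int.cast_natCast, ← Int.cast_mul, Int.mul_ediv_cancel' hdvd]
  have hw' : w' ≠ 0 := fun h => hw <| by
    ext i
    simpa [intCast, h] using congrFun hw_eq i
  have hpos := hQ.quadForm_pos (x := intCast w') fun h => hw' <| by
    ext i; simpa [intCast] using congrFun h i
  have hle := hmin w' hw'
  rw [hw_eq, quadForm_smul] at hle
  by_contra hg1
  have : (2 : ℝ) ≤ g := by exact_mod_cast (by omega : 2 ≤ g)
  nlinarith [mul_pos hpos (by nlinarith : (0 : ℝ) < (g : ℝ) ^ 2 - 1)]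

/-- A minimal vector is primitive, hence the first column of a unimodular matrix. -/
lemma IsPQF.exists_intEquivalent_apply_zero_zero_le (hQ : IsPQF Q) :
    ∃ Q', IntEquivalent Q Q' ∧ ∀ v, v ≠ 0 → Q' 0 0 ≤ quadForm Q' (intCast v) := by
  obtain ⟨w, hw, hmin⟩ := hQ.exists_forall_quadForm_intCast_le
  obtain ⟨x, y, hxy⟩ := hQ.isCoprime_of_forall_quadForm_intCast_le hw hmin
  set U : Matrix (Fin 2) (Fin 2) ℤ := !![w 0, -y; w 1, x]
  have hU : U.det = 1 := by rw [det_fin_two_of]; linear_combination hxy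
  have hUe : U *ᵥ ![1, 0] = w := by
    ext i; fin_cases i <;> simp [U, mulVec, dotProduct, Fin.sum_univ_two]
  refine ⟨_, intEquivalent_of_isUnit Q (hU ▸ isUnit_one), fun v hv => ?_⟩
  have h00 : ((U.map (Int.cast : ℤ → ℝ))ᵀ * Q * U.map Int.cast : Matrix (Fin 2) (Fin 2) ℝ) 0 0 =
      quadForm Q (intCast w) := by
    rw [← hUe, ← quadForm_transpose_mul_mul_intCast]
    simp [quadForm, intCast, mulVec, dotProduct, Fin.sum_univ_two]
  rw [h00, quadForm_transpose_mul_mul_intCast]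
  exact hmin _ fun h => hv <|
    mulVec_injective_of_det_ne_zero (by simp [hU]) (h.trans (mulVec_zero U).symm)

lemma intEquivalent_shear (hQ : Q.IsSymm) (k : ℤ) :
    IntEquivalent Q !![Q 0 0, Q 0 1 - k * Q 0 0;
      Q 0 1 - k * Q 0 0, quadForm Q (intCast ![-k, 1])] := by
  convert intEquivalent_of_isUnit Q (U := !![1, -k; 0, 1]) (by simp [det_fin_two_of]) using 1
  rw [quadForm_fin_two hQ]
  ext i j
  fin_cases i <;> fin_cases j <;>
    simp [Matrix.mul_apply, Fin.sum_univ_two, intCast, hQ.apply 0 1] <;> ring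

lemma intEquivalent_neg_offDiag (hQ : Q.IsSymm) :
    IntEquivalent Q !![Q 0 0, -Q 0 1; -Q 0 1, Q 1 1] := by
  convert intEquivalent_of_isUnit Q (U := !![1, 0; 0, -1]) (by simp [det_fin_two_of]) using 1
  ext i j
  fin_cases i <;> fin_cases j <;> simp [Matrix.mul_apply, Fin.sum_univ_two, hQ.apply 0 1]

def IsGaussReduced (Q : Matrix (Fin 2) (Fin 2) ℝ) : Prop :=
  0 ≤ Q 0 1 ∧ 2 * Q 0 1 ≤ Q 0 0 ∧ Q 0 0 ≤ Q 1 1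

lemma IsPQF.exists_intEquivalent_isGaussReduced (hQ : IsPQF Q) :
    ∃ R, IntEquivalent Q R ∧ IsGaussReduced R := by
  obtain ⟨Q₁, hQQ₁, hmin⟩ := hQ.exists_intEquivalent_apply_zero_zero_le
  set a := Q₁ 0 0
  set b := Q₁ 0 1
  set k := round (b / a)
  have ha : 0 < a := (hQQ₁.isPQF hQ).2.diag_pos
  have hQQ₂ := hQQ₁.trans (intEquivalent_shear (hQQ₁.isPQF hQ).1 k)
  have hb : |b - k * a| ≤ a / 2 := by
    have hk : |b / a - k| ≤ 1 / 2 := abs_sub_round (b / a)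
    rw [show b - k * a = (b / a - k) * a by field_simp, abs_mul, abs_of_pos ha]
    nlinarith
  have hc : a ≤ quadForm Q₁ (intCast ![-k, 1]) := hmin _ (by simp)
  simp only [IsGaussReduced]
  rcases le_total 0 (b - k * a) with hpos | hneg
  · refine ⟨_, hQQ₂, ?_⟩
    simp only [of_apply, cons_val', cons_val_zero, cons_val_one, empty_val', cons_val_fin_one]
    exact ⟨hpos, by linarith [le_abs_self (b - k * a)], hc⟩
  · refine ⟨_, hQQ₂.trans (intEquivalent_neg_offDiag (hQQ₂.isPQF hQ).1), ?_⟩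
    simp only [of_apply, cons_val', cons_val_zero, cons_val_one, empty_val', cons_val_fin_one]
    exact ⟨by linarith, by linarith [neg_le_abs (b - k * a)], hc⟩

end Binary

section CircumRadius

variable {Q : Matrix (Fin 2) (Fin 2) ℝ}

/-- The squared circumradius, in the metric `Q`, of the triangle with vertices `0`, `e₀`, `e₁`. -/
def circumRadiusSq (Q : Matrix (Fin 2) (Fin 2) ℝ) : ℝ :=
  Q 0 0 * Q 1 1 * (Q 0 0 + Q 1 1 - 2 * Q 0 1) / (4 * Q.det)

/-- The left side is the barycentric average of `Q[y - v]` over the vertices `v` of the triangle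
`0, e₀, e₁`, for `y = (s, t)`; it equals `R² - Q[y - o]`, with `o` the circumcentre. -/
lemma IsPQF.barycentric_average_le_circumRadiusSq (hQ : IsPQF Q) (s t : ℝ) :
    Q 0 0 * s * (1 - s) + Q 1 1 * t * (1 - t) - 2 * Q 0 1 * s * t ≤ circumRadiusSq Q := by
  have ha : 0 < Q 0 0 := hQ.2.diag_pos
  have hD : 0 < Q 0 0 * Q 1 1 - Q 0 1 ^ 2 := hQ.1.det_fin_two ▸ hQ.2.det_pos
  rw [circumRadiusSq, hQ.1.det_fin_two, le_div_iff₀ (by positivity)]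
  set a := Q 0 0
  set b := Q 0 1
  set c := Q 1 1
  set U := 2 * (a * c - b ^ 2) * s - c * (a - b)
  set V := 2 * (a * c - b ^ 2) * t - a * (c - b)
  nlinarith [sq_nonneg (a * U + b * V), mul_nonneg hD.le (sq_nonneg V), mul_pos ha hD]

lemma IsPQF.exists_quadForm_le_circumRadiusSq_of_mem_triangle (hQ : IsPQF Q) {s t : ℝ}
    (hs : 0 ≤ s) (ht : 0 ≤ t) (hst : s + t ≤ 1) :
    ∃ p q : ℤ, quadForm Q ![s - p, t - q] ≤ circumRadiusSq Q := by
  set f : ℝ → ℝ → ℝ := fun u v => quadForm Q ![u, v]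
  have hf : ∀ u v, f u v = Q 0 0 * u ^ 2 + 2 * Q 0 1 * u * v + Q 1 1 * v ^ 2 := quadForm_vec2 hQ.1
  set m := min (min (f s t) (f (s - 1) t)) (f s (t - 1))
  have hm : m ≤ circumRadiusSq Q := by
    have h₀ : m ≤ f s t := (min_le_left _ _).trans (min_le_left _ _)
    have h₁ : m ≤ f (s - 1) t := (min_le_left _ _).trans (min_le_right _ _)
    have h₂ : m ≤ f s (t - 1) := min_le_right _ _
    rw [hf] at h₀ h₁ h₂
    nlinarith [hQ.barycentric_average_le_circumRadiusSq s t,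
      mul_le_mul_of_nonneg_left h₀ (by linarith : 0 ≤ 1 - s - t),
      mul_le_mul_of_nonneg_left h₁ hs, mul_le_mul_of_nonneg_left h₂ ht]
  simp only [m, min_le_iff] at hm
  rcases hm with (h | h) | h
  exacts [⟨0, 0, by simpa using h⟩, ⟨1, 0, by simpa using h⟩, ⟨0, 1, by simpa using h⟩]

lemma IsPQF.exists_quadForm_sub_intCast_le_circumRadiusSq (hQ : IsPQF Q) (x : Fin 2 → ℝ) :
    ∃ v, quadForm Q (x - intCast v) ≤ circumRadiusSq Q := by
  have hx : ∀ p q : ℤ, x - intCast ![⌊x 0⌋ + p, ⌊x 1⌋ + q] =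
      ![Int.fract (x 0) - p, Int.fract (x 1) - q] := by
    intro p q
    ext i; fin_cases i <;> simp [intCast, ← Int.self_sub_floor] <;> ring
  rcases le_total (Int.fract (x 0) + Int.fract (x 1)) 1 with hst | hst
  · obtain ⟨p, q, h⟩ := hQ.exists_quadForm_le_circumRadiusSq_of_mem_triangle
      (Int.fract_nonneg (x 0)) (Int.fract_nonneg (x 1)) hst
    exact ⟨_, (hx p q).symm ▸ h⟩
  · obtain ⟨p, q, h⟩ := hQ.exists_quadForm_le_circumRadiusSq_of_mem_triangle
      (s := 1 - Int.fract (x 0)) (t := 1 - Int.fract (x 1))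
      (by linarith [Int.fract_lt_one (x 0)]) (by linarith [Int.fract_lt_one (x 1)]) (by linarith)
    refine ⟨![⌊x 0⌋ + (1 - p), ⌊x 1⌋ + (1 - q)], h.trans_eq' ?_⟩
    rw [hx (1 - p) (1 - q), quadForm_vec2 hQ.1, quadForm_vec2 hQ.1]
    push_cast
    ring

lemma IsPQF.iInf_quadForm_sub_intCast_le_circumRadiusSq (hQ : IsPQF Q) (x : Fin 2 → ℝ) :
    ⨅ v, quadForm Q (x - intCast v) ≤ circumRadiusSq Q := by
  obtain ⟨v, hv⟩ := hQ.exists_quadForm_sub_intCast_le_circumRadiusSq x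
  exact (ciInf_le ⟨0, Set.forall_mem_range.mpr fun _ => hQ.quadForm_nonneg _⟩ v).trans hv

lemma IsPQF.inhomMin_le_circumRadiusSq (hQ : IsPQF Q) : inhomMin Q ≤ circumRadiusSq Q :=
  ciSup_le hQ.iInf_quadForm_sub_intCast_le_circumRadiusSq

lemma intCast_mul_sub_one_nonneg (k : ℤ) : 0 ≤ (k : ℝ) * (k - 1) := by
  have : 0 ≤ k * (k - 1) := by rcases le_or_gt k 0 with h | h <;> nlinarith
  exact_mod_cast this

/-- No lattice point is closer to the circumcentre of the triangle `0, e₀, e₁` than its vertices,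
because the triangle is non-obtuse. -/
lemma IsPQF.circumRadiusSq_le_inhomMin (hQ : IsPQF Q) (hb : 0 ≤ Q 0 1) (hba : Q 0 1 ≤ Q 0 0)
    (hbc : Q 0 1 ≤ Q 1 1) : circumRadiusSq Q ≤ inhomMin Q := by
  have hD : Q 0 0 * Q 1 1 - Q 0 1 ^ 2 ≠ 0 := hQ.1.det_fin_two ▸ hQ.2.det_pos.ne'
  set o : Fin 2 → ℝ :=
    ![Q 1 1 * (Q 0 0 - Q 0 1) / (2 * Q.det), Q 0 0 * (Q 1 1 - Q 0 1) / (2 * Q.det)]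
  have hbdd : BddAbove (Set.range fun x => ⨅ v, quadForm Q (x - intCast v)) :=
    ⟨_, Set.forall_mem_range.mpr hQ.iInf_quadForm_sub_intCast_le_circumRadiusSq⟩
  refine le_trans (le_ciInf fun v => ?_) (le_ciSup hbdd o)
  have ho : o - intCast v = ![o 0 - v 0, o 1 - v 1] := by
    ext i; fin_cases i <;> simp [intCast]
  have key : quadForm Q (o - intCast v) - circumRadiusSq Q =
      Q 0 1 * ((v 0 + v 1) * (v 0 + v 1 - 1)) + (Q 0 0 - Q 0 1) * (v 0 * (v 0 - 1))
        + (Q 1 1 - Q 0 1) * (v 1 * (v 1 - 1)) := by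
    rw [ho, quadForm_vec2 hQ.1, circumRadiusSq]
    simp only [o, cons_val_zero, cons_val_one, hQ.1.det_fin_two]
    field_simp
    ring
  have h₀₁ := intCast_mul_sub_one_nonneg (v 0 + v 1)
  push_cast at h₀₁
  linarith [mul_nonneg hb h₀₁, mul_nonneg (sub_nonneg.mpr hba) (intCast_mul_sub_one_nonneg (v 0)),
    mul_nonneg (sub_nonneg.mpr hbc) (intCast_mul_sub_one_nonneg (v 1))]

end CircumRadius

section Kershner

variable {Q : Matrix (Fin 2) (Fin 2) ℝ}

/-- Substituting `b = p²`, `a = 2b + q²`, `c = a + r²` turns the difference into a polynomial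
with nonnegative coefficients. -/
lemma sixtyFour_mul_cube_le_twentySeven_mul_sq {a b c : ℝ} (hb : 0 ≤ b) (hba : 2 * b ≤ a)
    (hac : a ≤ c) : 64 * (a * c - b ^ 2) ^ 3 ≤ 27 * (a * c * (a + c - 2 * b)) ^ 2 := by
  obtain ⟨p, rfl⟩ : ∃ p, b = p ^ 2 := ⟨√b, (Real.sq_sqrt hb).symm⟩
  obtain ⟨q, rfl⟩ : ∃ q, a = 2 * p ^ 2 + q ^ 2 :=
    ⟨√(a - 2 * p ^ 2), by rw [Real.sq_sqrt (by linarith)]; ring⟩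
  obtain ⟨r, rfl⟩ : ∃ r, c = 2 * p ^ 2 + q ^ 2 + r ^ 2 :=
    ⟨√(c - (2 * p ^ 2 + q ^ 2)), by rw [Real.sq_sqrt (by linarith)]; ring⟩
  rw [← sub_nonneg]
  ring_nf
  positivity

lemma IsPQF.four_div_twentySeven_le_circumRadiusSq_sq_div_det (hQ : IsPQF Q)
    (hR : IsGaussReduced Q) : 4 / 27 ≤ circumRadiusSq Q ^ 2 / Q.det := by
  obtain ⟨hb, hba, hac⟩ := hR
  have hD := hQ.2.det_pos
  have key := sixtyFour_mul_cube_le_twentySeven_mul_sq hb hba hac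
  rw [← hQ.1.det_fin_two] at key
  rw [circumRadiusSq, div_pow, div_div, le_div_iff₀ (by positivity)]
  nlinarith

lemma ballVol_two : ballVol 2 = π := by
  rw [ballVol, EuclideanSpace.volume_ball, Fintype.card_fin]
  norm_num [Real.sq_sqrt Real.pi_pos.le, Real.pi_pos.le]

lemma covDensity_fin_two (Q : Matrix (Fin 2) (Fin 2) ℝ) :
    covDensity Q = π * √(inhomMin Q ^ 2 / Q.det) := by
  rw [covDensity, ballVol_two, mul_comm]

lemma two_mul_pi_div_sqrt_twentySeven : 2 * π / √27 = π * √(4 / 27) := by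
  rw [Real.sqrt_div' _ (by norm_num : (0 : ℝ) ≤ 27), show (4 : ℝ) = 2 ^ 2 by norm_num,
    Real.sqrt_sq (by norm_num : (0 : ℝ) ≤ 2)]
  ring

lemma IsPQF.two_mul_pi_div_sqrt_twentySeven_le_covDensity (hQ : IsPQF Q)
    (hR : IsGaussReduced Q) : 2 * π / √27 ≤ covDensity Q := by
  obtain ⟨hb, hba, hac⟩ := hR
  have hD := hQ.2.det_pos
  have hR0 : 0 ≤ circumRadiusSq Q :=
    div_nonneg (mul_nonneg (mul_nonneg hQ.2.diag_pos.le hQ.2.diag_pos.le) (by linarith))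
      (by linarith)
  have hRμ := hQ.circumRadiusSq_le_inhomMin hb (by linarith) (by linarith)
  rw [covDensity_fin_two, two_mul_pi_div_sqrt_twentySeven]
  refine mul_le_mul_of_nonneg_left (Real.sqrt_le_sqrt ?_) Real.pi_pos.le
  calc 4 / 27 ≤ circumRadiusSq Q ^ 2 / Q.det :=
        hQ.four_div_twentySeven_le_circumRadiusSq_sq_div_det ⟨hb, hba, hac⟩
    _ ≤ inhomMin Q ^ 2 / Q.det := by gcongr

end Kershner

section Hexagonal

lemma isPQF_hexagonal : IsPQF !![(2 : ℝ), 1; 1, 2] :=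
  isPQF_of_fin_two (by ext i j; fin_cases i <;> fin_cases j <;> rfl) (by simp)
    (by norm_num [det_fin_two_of])

lemma inhomMin_hexagonal : inhomMin !![(2 : ℝ), 1; 1, 2] = 2 / 3 := by
  have hR : circumRadiusSq !![(2 : ℝ), 1; 1, 2] = 2 / 3 := by
    norm_num [circumRadiusSq, det_fin_two_of]
  exact le_antisymm (hR ▸ isPQF_hexagonal.inhomMin_le_circumRadiusSq)
    (hR ▸ isPQF_hexagonal.circumRadiusSq_le_inhomMin (by simp) (by simp) (by simp))

lemma intEquivalent_QAstar_two_hexagonal : IntEquivalent (QAstar 2) !![(2 : ℝ), 1; 1, 2] := by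
  convert intEquivalent_neg_offDiag (Q := QAstar 2)
    (by ext i j; fin_cases i <;> fin_cases j <;> rfl) using 1
  ext i j; fin_cases i <;> fin_cases j <;> simp [QAstar]

lemma covDensity_QAstar_two : covDensity (QAstar 2) = 2 * π / √27 := by
  rw [← intEquivalent_QAstar_two_hexagonal.covDensity_eq, covDensity_fin_two, inhomMin_hexagonal,
    det_fin_two_of, two_mul_pi_div_sqrt_twentySeven]
  norm_num

end Hexagonal

/-- Kershner's theorem: every binary PQF has covering density at least `2π/√27`,
attained by `Q_{A*_2}`. -/
theorem covering_optimal_dim2 :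
    (∀ Q : Matrix (Fin 2) (Fin 2) ℝ, IsPQF Q →
      2 * Real.pi / Real.sqrt 27 ≤ covDensity Q) ∧
    covDensity (QAstar 2) = 2 * Real.pi / Real.sqrt 27 := by
  refine ⟨fun Q hQ => ?_, covDensity_QAstar_two⟩
  obtain ⟨R, hQR, hR⟩ := hQ.exists_intEquivalent_isGaussReduced
  rw [← hQR.covDensity_eq]
  exact (hQR.isPQF hQ).two_mul_pi_div_sqrt_twentySeven_le_covDensity hR
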